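/- Let m, n be natural numbers with n ≥ 1, and let F : ℕ → ℝ → ℂ satisfy F 0 u = u^m · e^{i u^n} for all real u, and F (j+1) u = ∫_{0}^{u} F j x dx for all j and all real u. Then for every k ≥ 1 and every real u, F k u = Σ_{l=0}^{∞} i^l · u^{m+nl+k} / ( l! · ∏_{r=1}^{k} (m+nl+r) ), where the series converges. -/

import Mathlib

/-!
Expanding `exp (I x^n) = ∑ (I x^n)^l / l!`, the function `x^m exp (I x^n)` is a power series whose
terms are monomials, and integrating the monomial `x^p` from `0` raises `p` by one and divides by
`p + 1`. On `[0, u]` the `l`-th term of each iterated series is bounded by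
`|u|^(m+k) (|u|^n)^l / l!`, a summable majorant independent of `x`, so dominated convergence lets
each of the `k` integrations be taken termwise.
-/

open Complex Set

theorem intervalIntegral_tsum_of_norm_le {E : Type*} [NormedAddCommGroup E] [NormedSpace ℝ E]
    [CompleteSpace E] {f : ℕ → ℝ → E} {a b : ℝ} {bound : ℕ → ℝ} (hf : ∀ l, Continuous (f l))
    (hle : ∀ l, ∀ x ∈ uIcc a b, ‖f l x‖ ≤ bound l) (hs : Summable bound) :
    ∫ x in a..b, ∑' l, f l x = ∑' l, ∫ x in a..b, f l x := by
  refine (intervalIntegral.hasSum_integral_of_dominated_convergence (fun l _ => bound l)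
    (fun l => (hf l).aestronglyMeasurable) ?_ (.of_forall fun _ _ => hs)
    intervalIntegrable_const ?_).tsum_eq.symm
  · exact fun l => .of_forall fun x hx => hle l x (uIoc_subset_uIcc hx)
  · refine .of_forall fun x hx => (hs.of_norm_bounded fun l => ?_).hasSum
    exact hle l x (uIoc_subset_uIcc hx)

theorem integral_ofReal_pow (p : ℕ) (u : ℝ) :
    ∫ x in (0 : ℝ)..u, (x : ℂ) ^ p = (u : ℂ) ^ (p + 1) / (p + 1) := by
  simp_rw [← ofReal_pow, intervalIntegral.integral_ofReal, integral_pow]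
  push_cast
  simp

theorem one_le_prod_Icc_add (a k : ℕ) : 1 ≤ ∏ r ∈ Finset.Icc 1 k, (a + r) :=
  Finset.one_le_prod' fun r hr => by grind

noncomputable def iterIntegralTerm (m n k l : ℕ) (x : ℝ) : ℂ :=
  I ^ l * (x : ℂ) ^ (m + n * l + k) /
    ((l.factorial : ℂ) * ∏ r ∈ Finset.Icc 1 k, ((m + n * l + r : ℕ) : ℂ))

theorem norm_iterIntegralTerm_le (m n k l : ℕ) {u x : ℝ} (hx : |x| ≤ |u|) :
    ‖iterIntegralTerm m n k l x‖ ≤ |u| ^ (m + k) * ((|u| ^ n) ^ l / l.factorial) := by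
  have hprod : (1 : ℝ) ≤ ∏ r ∈ Finset.Icc 1 k, ((m + n * l + r : ℕ) : ℝ) := by
    exact_mod_cast one_le_prod_Icc_add (m + n * l) k
  have hnorm : ‖iterIntegralTerm m n k l x‖ = |x| ^ (m + n * l + k) /
      (l.factorial * ∏ r ∈ Finset.Icc 1 k, ((m + n * l + r : ℕ) : ℝ)) := by
    simp only [iterIntegralTerm, norm_div, norm_mul, norm_pow, norm_I, one_pow, one_mul,
      norm_real, Real.norm_eq_abs, norm_prod, norm_natCast]
  calc ‖iterIntegralTerm m n k l x‖ ≤ |x| ^ (m + n * l + k) / l.factorial := by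
        rw [hnorm]
        gcongr
        exact le_mul_of_one_le_right (by positivity) hprod
    _ ≤ |u| ^ (m + n * l + k) / l.factorial := by gcongr
    _ = |u| ^ (m + k) * ((|u| ^ n) ^ l / l.factorial) := by ring

theorem summable_iterIntegralTerm (m n k : ℕ) (u : ℝ) :
    Summable fun l => iterIntegralTerm m n k l u :=
  ((Real.summable_pow_div_factorial _).mul_left _).of_norm_bounded
    fun l => norm_iterIntegralTerm_le m n k l le_rfl

theorem tsum_iterIntegralTerm_zero (m n : ℕ) (u : ℝ) :
    ∑' l, iterIntegralTerm m n 0 l u = (u : ℂ) ^ m * exp (I * (u : ℂ) ^ n) := by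
  rw [exp_eq_exp_ℂ, NormedSpace.exp_eq_tsum_div, ← tsum_mul_left]
  refine tsum_congr fun l => ?_
  simp only [iterIntegralTerm, Finset.Icc_eq_empty_of_lt one_pos, Finset.prod_empty, mul_one]
  rw [mul_pow, ← pow_mul, add_zero, pow_add]
  ring

theorem integral_iterIntegralTerm (m n k l : ℕ) (u : ℝ) :
    ∫ x in (0 : ℝ)..u, iterIntegralTerm m n k l x = iterIntegralTerm m n (k + 1) l u := by
  have hfac : (l.factorial : ℂ) ≠ 0 := by exact_mod_cast l.factorial_ne_zero
  have hprod : ∏ r ∈ Finset.Icc 1 k, ((m + n * l + r : ℕ) : ℂ) ≠ 0 := by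
    exact_mod_cast Nat.one_le_iff_ne_zero.mp (one_le_prod_Icc_add (m + n * l) k)
  simp only [iterIntegralTerm]
  rw [intervalIntegral.integral_div, intervalIntegral.integral_const_mul, integral_ofReal_pow,
    Finset.prod_Icc_succ_top (by omega : 1 ≤ k + 1)]
  have hlast : ((m + n * l + (k + 1) : ℕ) : ℂ) = ((m + n * l + k : ℕ) : ℂ) + 1 := by
    push_cast; ring
  rw [hlast, show m + n * l + (k + 1) = m + n * l + k + 1 by ring]
  field_simp

theorem eq_tsum_iterIntegralTerm (m n : ℕ) (F : ℕ → ℝ → ℂ)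
    (hF0 : ∀ u : ℝ, F 0 u = (u : ℂ) ^ m * exp (I * (u : ℂ) ^ n))
    (hFs : ∀ j : ℕ, ∀ u : ℝ, F (j + 1) u = ∫ x in (0:ℝ)..u, F j x) (k : ℕ) (u : ℝ) :
    F k u = ∑' l, iterIntegralTerm m n k l u := by
  induction k generalizing u with
  | zero => rw [hF0, tsum_iterIntegralTerm_zero]
  | succ k ih =>
    have hbound : ∀ l, ∀ x ∈ uIcc 0 u,
        ‖iterIntegralTerm m n k l x‖ ≤ |u| ^ (m + k) * ((|u| ^ n) ^ l / l.factorial) :=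
      fun l x hx => norm_iterIntegralTerm_le m n k l (by simpa using abs_sub_left_of_mem_uIcc hx)
    simp_rw [hFs, ih]
    rw [intervalIntegral_tsum_of_norm_le (fun l => by unfold iterIntegralTerm; fun_prop) hbound
      ((Real.summable_pow_div_factorial _).mul_left _)]
    simp_rw [integral_iterIntegralTerm]

theorem stmt12_general (m n : ℕ) (F : ℕ → ℝ → ℂ)
    (hF0 : ∀ u : ℝ, F 0 u = (u : ℂ) ^ m * Complex.exp (Complex.I * (u : ℂ) ^ n))
    (hFs : ∀ j : ℕ, ∀ u : ℝ, F (j + 1) u = ∫ x in (0:ℝ)..u, F j x) :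
    ∀ k : ℕ, 1 ≤ k → ∀ u : ℝ,
      Summable (fun l : ℕ => Complex.I ^ l * (u : ℂ) ^ (m + n * l + k) /
          ((l.factorial : ℂ) * ∏ r ∈ Finset.Icc 1 k, ((m + n * l + r : ℕ) : ℂ))) ∧
      F k u = ∑' l : ℕ, Complex.I ^ l * (u : ℂ) ^ (m + n * l + k) /
          ((l.factorial : ℂ) * ∏ r ∈ Finset.Icc 1 k, ((m + n * l + r : ℕ) : ℂ)) :=
  fun k _ u => ⟨summable_iterIntegralTerm m n k u, eq_tsum_iterIntegralTerm m n F hF0 hFs k u⟩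

/-- The `k`-fold repeated integral (all lower limits 0) of `x^m exp(i x^n)` as a convergent
series. -/
theorem stmt12 (m n : ℕ) (hn : 1 ≤ n) (F : ℕ → ℝ → ℂ)
    (hF0 : ∀ u : ℝ, F 0 u = (u : ℂ) ^ m * Complex.exp (Complex.I * (u : ℂ) ^ n))
    (hFs : ∀ j : ℕ, ∀ u : ℝ, F (j + 1) u = ∫ x in (0:ℝ)..u, F j x) :
    ∀ k : ℕ, 1 ≤ k → ∀ u : ℝ,
      Summable (fun l : ℕ => Complex.I ^ l * (u : ℂ) ^ (m + n * l + k) /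
          ((l.factorial : ℂ) * ∏ r ∈ Finset.Icc 1 k, ((m + n * l + r : ℕ) : ℂ))) ∧
      F k u = ∑' l : ℕ, Complex.I ^ l * (u : ℂ) ^ (m + n * l + k) /
          ((l.factorial : ℂ) * ∏ r ∈ Finset.Icc 1 k, ((m + n * l + r : ℕ) : ℂ)) :=
  stmt12_general m n F hF0 hFs
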